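/- (Gordan's Lemma, general form) A commutative, cancellative, torsion-free monoid M of finite rank is finitely generated if and only if its group of differences gp(M) is finitely generated and the cone R_+ M spanned by M in R^(rank M) is a finite polyhedral rational cone. -/

import Mathlib

/-- Componentwise inclusion `ℚ^r → ℝ^r`. -/
def toR {r : ℕ} (v : Fin r → ℚ) : Fin r → ℝ := fun i => (v i : ℝ)

/-- The cone `ℝ₊ s` spanned by a subset `s ⊆ ℝ^r`: all finite nonnegative real
combinations of elements of `s`. -/
def coneOf {r : ℕ} (s : Set (Fin r → ℝ)) : Set (Fin r → ℝ) :=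
  {x | ∃ (n : ℕ) (cc : Fin n → ℝ) (w : Fin n → Fin r → ℝ),
    (∀ i, 0 ≤ cc i) ∧ (∀ i, w i ∈ s) ∧ x = ∑ i, cc i • w i}

/-!
Generators of `M` generate its group of differences and span its cone. Conversely, by
Carathéodory's theorem a rational point of the cone is a nonnegative combination of linearly
independent rational generators, and such coefficients are rational. So the cone generators can
be scaled into `M`, and every `m ∈ M` is `∑ ⌊qᵢ⌋₊ gᵢ + f` with the remainder `f` in the finitely
generated group `gp(M)` and in a bounded box, hence in a finite set. For each remainder,
Dickson's lemma leaves finitely many minimal exponent vectors, which complete a finite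
generating set.
-/

section Caratheodory

variable {K V ι : Type*} [Field K] [LinearOrder K] [IsStrictOrderedRing K]
  [AddCommGroup V] [Module K V] [Fintype ι]

theorem exists_pos_of_not_linearIndependent {w : ι → V} (h : ¬LinearIndependent K w) :
    ∃ d : ι → K, ∑ i, d i • w i = 0 ∧ ∃ i, 0 < d i := by
  obtain ⟨d, hd, i, hi⟩ := Fintype.not_linearIndependent_iff.1 h
  rcases hi.lt_or_gt with hneg | hpos
  · refine ⟨-d, ?_, i, neg_pos.2 hneg⟩
    simp only [Pi.neg_apply, neg_smul, Finset.sum_neg_distrib, hd, neg_zero]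
  · exact ⟨d, hd, i, hpos⟩

/-- Subtract from `c` the largest multiple of the relation `d` keeping all coefficients
nonnegative; some coefficient then vanishes. -/
theorem exists_nonneg_sum_smul_eq_of_sum_smul_eq_zero {w : ι → V} {c d : ι → K}
    (hc : ∀ i, 0 ≤ c i) (hd : ∑ i, d i • w i = 0) (hpos : ∃ i, 0 < d i) :
    ∃ c' : ι → K, ∃ i₀, (∀ i, 0 ≤ c' i) ∧ c' i₀ = 0 ∧ ∑ i, c' i • w i = ∑ i, c i • w i := by
  classical
  obtain ⟨i₀, hi₀, hmin⟩ := (Finset.univ.filter fun i => 0 < d i).exists_min_image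
    (fun i => c i / d i) (by simpa [Finset.Nonempty] using hpos)
  have hdi₀ : 0 < d i₀ := (Finset.mem_filter.1 hi₀).2
  set t := c i₀ / d i₀
  refine ⟨fun i => c i - t * d i, i₀, fun i => ?_, ?_, ?_⟩
  · rcases le_or_gt (d i) 0 with hdi | hdi
    · nlinarith [hc i, div_nonneg (hc i₀) hdi₀.le]
    · rw [sub_nonneg, ← le_div_iff₀ hdi]
      exact hmin i (by simp [hdi])
  · simp [t, div_mul_cancel₀ _ hdi₀.ne']
  · simp only [sub_smul, Finset.sum_sub_distrib, mul_smul, ← Finset.smul_sum, hd, smul_zero,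
      sub_zero]

theorem exists_linearIndependent_nonneg_sum_smul_eq (n : ℕ) (c : Fin n → K) (w : Fin n → V)
    (hc : ∀ i, 0 ≤ c i) :
    ∃ (m : ℕ) (c' : Fin m → K) (w' : Fin m → V), (∀ i, 0 ≤ c' i) ∧ (∀ i, w' i ∈ Set.range w) ∧
      LinearIndependent K w' ∧ ∑ i, c' i • w' i = ∑ i, c i • w i := by
  induction n with
  | zero => exact ⟨0, c, w, hc, fun i => ⟨i, rfl⟩, linearIndependent_empty_type, rfl⟩
  | succ n ih =>
    by_cases hw : LinearIndependent K w
    · exact ⟨_, c, w, hc, fun i => ⟨i, rfl⟩, hw, rfl⟩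
    obtain ⟨d, hd, hpos⟩ := exists_pos_of_not_linearIndependent hw
    obtain ⟨c₁, i₀, hc₁, hc₁i₀, hsum⟩ := exists_nonneg_sum_smul_eq_of_sum_smul_eq_zero hc hd hpos
    obtain ⟨m, c', w', hc', hw', hli, hsum'⟩ :=
      ih (c₁ ∘ i₀.succAbove) (w ∘ i₀.succAbove) fun i => hc₁ _
    refine ⟨m, c', w', hc', fun i => ?_, hli, ?_⟩
    · obtain ⟨j, hj⟩ := hw' i
      exact ⟨_, hj⟩
    · rw [hsum', ← hsum, Fin.sum_univ_succAbove _ i₀, hc₁i₀, zero_smul, zero_add]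
      rfl

end Caratheodory

theorem exists_algebraMap_eq_of_linearIndependent {K L ι ι' : Type*} [Field K] [Field L]
    [Algebra K L] [Fintype ι] [Finite ι'] {v : ι → ι' → K} (hv : LinearIndependent K v)
    {x : ι' → K} {c : ι → L} (hx : algebraMap K L ∘ x = ∑ i, c i • (algebraMap K L ∘ v i)) :
    ∃ d : ι → K, (∀ i, algebraMap K L (d i) = c i) ∧ x = ∑ i, d i • v i := by
  have hspan : x ∈ Submodule.span K (Set.range v) := by
    by_contra hx'
    have hli := (linearIndependent_algebraMap_comp_iff (S := L)).2 (hv.option hx')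
    have hcases : (fun o => algebraMap K L ∘ Option.casesOn' o x v) =
        fun o => Option.casesOn' o (algebraMap K L ∘ x) fun i => algebraMap K L ∘ v i := by
      funext o; cases o <;> rfl
    rw [hcases] at hli
    refine (linearIndependent_option'.1 hli).2 (hx ▸ Submodule.sum_mem _ fun i _ => ?_)
    exact Submodule.smul_mem _ _ (Submodule.subset_span ⟨i, rfl⟩)
  obtain ⟨d, rfl⟩ := (Submodule.mem_span_range_iff_exists_fun K).1 hspan
  refine ⟨d, fun i => ?_, rfl⟩
  refine Fintype.linearIndependent_iffₛ.1 ((linearIndependent_algebraMap_comp_iff (S := L)).2 hv)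
    (fun i => algebraMap K L (d i)) c (Eq.trans ?_ hx) i
  funext j
  simp [Finset.sum_apply, Algebra.smul_def]

section Cone

variable {r : ℕ} {s u : Set (Fin r → ℝ)}

theorem subset_coneOf : s ⊆ coneOf s := fun x hx =>
  ⟨1, fun _ => 1, fun _ => x, fun _ => zero_le_one, fun _ => hx, by simp⟩

theorem zero_mem_coneOf : (0 : Fin r → ℝ) ∈ coneOf s :=
  ⟨0, Fin.elim0, Fin.elim0, fun i => i.elim0, fun i => i.elim0, by simp⟩

theorem add_mem_coneOf {x y : Fin r → ℝ} (hx : x ∈ coneOf s) (hy : y ∈ coneOf s) :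
    x + y ∈ coneOf s := by
  obtain ⟨n, c, w, hc, hw, rfl⟩ := hx
  obtain ⟨m, d, v, hd, hv, rfl⟩ := hy
  refine ⟨n + m, Fin.append c d, Fin.append w v, fun i => ?_, fun i => ?_, ?_⟩
  · cases i using Fin.addCases <;> simp [hc, hd]
  · cases i using Fin.addCases <;> simp [hw, hv]
  · simp [Fin.sum_univ_add]

theorem smul_mem_coneOf {x : Fin r → ℝ} {a : ℝ} (ha : 0 ≤ a) (hx : x ∈ coneOf s) :
    a • x ∈ coneOf s := by
  obtain ⟨n, c, w, hc, hw, rfl⟩ := hx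
  exact ⟨n, fun i => a * c i, w, fun i => mul_nonneg ha (hc i), hw, by
    simp only [Finset.smul_sum, smul_smul]⟩

theorem coneOf_subset_iff : coneOf s ⊆ coneOf u ↔ s ⊆ coneOf u := by
  refine ⟨fun h => subset_coneOf.trans h, fun h => ?_⟩
  rintro _ ⟨n, c, w, hc, hw, rfl⟩
  exact Finset.sum_induction _ (· ∈ coneOf u) (fun _ _ => add_mem_coneOf) zero_mem_coneOf
    fun i _ => smul_mem_coneOf (hc i) (h (hw i))

theorem coneOf_mono (h : s ⊆ u) : coneOf s ⊆ coneOf u :=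
  coneOf_subset_iff.2 (h.trans subset_coneOf)

end Cone

section toR

variable {r : ℕ}

theorem toR_eq_algebraMap_comp (v : Fin r → ℚ) : toR v = algebraMap ℚ ℝ ∘ v :=
  funext fun i => (eq_ratCast _ (v i)).symm

theorem toR_zero : toR (0 : Fin r → ℚ) = 0 := funext fun _ => Rat.cast_zero

theorem toR_add (x y : Fin r → ℚ) : toR (x + y) = toR x + toR y :=
  funext fun _ => Rat.cast_add _ _

theorem toR_nsmul (n : ℕ) (x : Fin r → ℚ) : toR (n • x) = (n : ℝ) • toR x := by
  funext i
  simp [toR]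

theorem exists_rat_nonneg_sum_of_toR_mem_coneOf {s : Set (Fin r → ℚ)} {x : Fin r → ℚ}
    (hx : toR x ∈ coneOf (toR '' s)) :
    ∃ (n : ℕ) (c : Fin n → ℚ) (w : Fin n → Fin r → ℚ),
      (∀ i, 0 ≤ c i) ∧ (∀ i, w i ∈ s) ∧ x = ∑ i, c i • w i := by
  obtain ⟨n, c, w, hc, hw, hxw⟩ := hx
  obtain ⟨m, c', w', hc', hw', hli, hsum⟩ := exists_linearIndependent_nonneg_sum_smul_eq n c w hc
  have hw's : ∀ i, w' i ∈ toR '' s := fun i => by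
    obtain ⟨j, hj⟩ := hw' i
    exact hj ▸ hw j
  choose u hu hwu using hw's
  obtain rfl : w' = fun i => toR (u i) := funext fun i => (hwu i).symm
  simp only [toR_eq_algebraMap_comp] at hli hxw hsum
  have hu_li : LinearIndependent ℚ u := linearIndependent_algebraMap_comp_iff.1 hli
  obtain ⟨d, hdc, rfl⟩ := exists_algebraMap_eq_of_linearIndependent hu_li (hxw.trans hsum.symm)
  refine ⟨m, d, u, fun i => ?_, hu, rfl⟩
  have hdi := hc' i
  rw [← hdc i, eq_ratCast] at hdi
  exact_mod_cast hdi

end toR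

def rootClosure {V : Type*} [AddCommMonoid V] (M : AddSubmonoid V) : AddSubmonoid V where
  carrier := {x | ∃ d : ℕ, 0 < d ∧ d • x ∈ M}
  zero_mem' := ⟨1, one_pos, by simp [M.zero_mem]⟩
  add_mem' := by
    rintro x y ⟨a, ha, hx⟩ ⟨b, hb, hy⟩
    refine ⟨a * b, Nat.mul_pos ha hb, ?_⟩
    rw [nsmul_add, mul_nsmul, mul_nsmul']
    exact M.add_mem (M.nsmul_mem hx b) (M.nsmul_mem hy a)

theorem smul_mem_rootClosure {V : Type*} [AddCommGroup V] [Module ℚ V] {M : AddSubmonoid V}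
    {q : ℚ} (hq : 0 ≤ q) {w : V} (hw : w ∈ M) : q • w ∈ rootClosure M := by
  refine ⟨q.den, q.den_pos, ?_⟩
  rw [← Nat.cast_smul_eq_nsmul ℚ, smul_smul, Rat.den_mul_eq_num,
    ← Int.toNat_of_nonneg (Rat.num_nonneg.2 hq), Int.cast_natCast, Nat.cast_smul_eq_nsmul]
  exact M.nsmul_mem hw _

theorem mem_rootClosure_of_toR_mem_coneOf {r : ℕ} {M : AddSubmonoid (Fin r → ℚ)}
    {x : Fin r → ℚ} (hx : toR x ∈ coneOf (toR '' M)) : x ∈ rootClosure M := by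
  obtain ⟨n, c, w, hc, hw, rfl⟩ := exists_rat_nonneg_sum_of_toR_mem_coneOf hx
  exact sum_mem fun i _ => smul_mem_rootClosure (hc i) (hw i)

theorem exists_mul_eq_intCast_of_den_dvd {q : ℚ} {N : ℕ} (h : q.den ∣ N) :
    ∃ z : ℤ, (N : ℚ) * q = z := by
  obtain ⟨k, rfl⟩ := h
  exact ⟨k * q.num, by push_cast; rw [mul_comm (q.den : ℚ), mul_assoc, Rat.den_mul_eq_num]⟩

theorem AddSubgroup.FG.exists_forall_eq_intCast_div {r : ℕ} {G : AddSubgroup (Fin r → ℚ)}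
    (hG : G.FG) : ∃ N : ℕ, 0 < N ∧ ∀ g ∈ G, ∃ z : Fin r → ℤ, ∀ i, g i = z i / N := by
  obtain ⟨S, rfl⟩ := hG
  set N := ∏ s ∈ S, ∏ i, (s i).den
  have hN : 0 < N := Finset.prod_pos fun s _ => Finset.prod_pos fun i _ => (s i).den_pos
  let φ : (Fin r → ℤ) →+ (Fin r → ℚ) := (DistribSMul.toAddMonoidHom _ (N : ℚ)⁻¹).comp
    (AddMonoidHom.compLeft (Int.castAddHom ℚ) (Fin r))
  have hφ : ∀ z i, φ z i = z i / N := fun z i => by simp [φ, div_eq_inv_mul]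
  suffices AddSubgroup.closure (S : Set (Fin r → ℚ)) ≤ φ.range by
    refine ⟨N, hN, fun g hg => ?_⟩
    obtain ⟨z, rfl⟩ := this hg
    exact ⟨z, hφ z⟩
  refine (AddSubgroup.closure_le _).2 fun s hs => ?_
  choose z hz using fun i => exists_mul_eq_intCast_of_den_dvd <|
    (Finset.dvd_prod_of_mem (fun i => (s i).den) (Finset.mem_univ i)).trans
      (Finset.dvd_prod_of_mem (fun s => ∏ i, (s i).den) hs)
  exact ⟨z, funext fun i => by rw [hφ, ← hz, mul_div_cancel_left₀ _ (by positivity)]⟩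

theorem AddSubgroup.FG.finite_setOf_abs_le {r : ℕ} {G : AddSubgroup (Fin r → ℚ)} (hG : G.FG)
    (B : Fin r → ℚ) : {g | g ∈ G ∧ ∀ i, |g i| ≤ B i}.Finite := by
  obtain ⟨N, hN, hGN⟩ := hG.exists_forall_eq_intCast_div
  refine ((Set.Finite.pi fun i => Set.finite_Icc (-⌈N * B i⌉) ⌈N * B i⌉).image
    fun (z : Fin r → ℤ) i => (z i : ℚ) / N).subset ?_
  rintro g ⟨hg, hgB⟩
  obtain ⟨z, hz⟩ := hGN g hg
  refine ⟨z, fun i _ => abs_le.1 ?_, funext fun i => (hz i).symm⟩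
  have hzi : (|z i| : ℚ) ≤ N * B i := by
    rw [← mul_div_cancel₀ (z i : ℚ) (by positivity : (N : ℚ) ≠ 0), ← hz i,
      abs_mul, Nat.abs_cast]
    exact mul_le_mul_of_nonneg_left (hgB i) (by positivity)
  exact_mod_cast hzi.trans (Int.le_ceil _)

theorem AddSubmonoid.fg_of_forall_eq_sum_nsmul_add {V ι : Type*} [AddCommMonoid V] [Fintype ι]
    {M : AddSubmonoid V} {g : ι → V} (hg : ∀ i, g i ∈ M) {F : Set V} (hF : F.Finite)
    (hM : ∀ m ∈ M, ∃ a : ι → ℕ, ∃ f ∈ F, m = ∑ i, a i • g i + f) : M.FG := by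
  let comb : (ι → ℕ) → V := fun a => ∑ i, a i • g i
  have comb_add : ∀ a b, comb (a + b) = comb a + comb b := fun a b => by
    simp only [comb, Pi.add_apply, add_nsmul, Finset.sum_add_distrib]
  let S : V → Set (ι → ℕ) := fun f => {a | comb a + f ∈ M}
  let gens := Set.range g ∪ ⋃ f ∈ F, (comb · + f) '' {a | Minimal (· ∈ S f) a}
  refine (AddSubmonoid.fg_iff M).2 ⟨gens, le_antisymm ?_ ?_, ?_⟩
  · refine (AddSubmonoid.closure_le).2 (Set.union_subset ?_ ?_)
    · rintro _ ⟨i, rfl⟩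
      exact hg i
    · simp only [Set.iUnion_subset_iff]
      rintro f - _ ⟨a, ha, rfl⟩
      exact ha.prop
  · intro m hm
    obtain ⟨a, f, hf, rfl⟩ := hM m hm
    obtain ⟨b, hba, hb⟩ := (Set.isPWO_of_wellQuasiOrderedLE (S f)).exists_le_minimal
      (show a ∈ S f from hm)
    have hsplit : comb a + f = (comb b + f) + comb (a - b) := by
      rw [add_right_comm, ← comb_add, add_tsub_cancel_of_le hba]
    have hmin : comb b + f ∈ AddSubmonoid.closure gens :=
      AddSubmonoid.subset_closure (Or.inr (Set.mem_biUnion hf ⟨b, hb, rfl⟩))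
    have hcomb : comb (a - b) ∈ AddSubmonoid.closure gens := by
      refine _root_.sum_mem fun i _ => AddSubmonoid.nsmul_mem _ ?_ _
      exact AddSubmonoid.subset_closure (Set.mem_union_left _ (Set.mem_range_self i))
    change comb a + f ∈ _
    rw [hsplit]
    exact AddSubmonoid.add_mem _ hmin hcomb
  · exact (Set.finite_range g).union <| hF.biUnion fun f _ =>
      ((setOfPred_minimal_antichain _).finite_of_partiallyWellOrderedOn
        (Set.isPWO_of_wellQuasiOrderedLE _)).image _

theorem abs_sum_smul_sub_sum_floor_smul_le {K ι ι' : Type*} [Field K] [LinearOrder K]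
    [IsStrictOrderedRing K] [FloorSemiring K] [Fintype ι] {q : ι → K} (hq : ∀ i, 0 ≤ q i)
    (g : ι → ι' → K) (j : ι') :
    |(∑ i, q i • g i - ∑ i, ⌊q i⌋₊ • g i) j| ≤ ∑ i, |g i j| := by
  have hexp : (∑ i, q i • g i - ∑ i, ⌊q i⌋₊ • g i) j = ∑ i, (q i - ⌊q i⌋₊) * g i j := by
    simp [Finset.sum_apply, sub_mul, nsmul_eq_mul]
  rw [hexp]
  refine (Finset.abs_sum_le_sum_abs _ _).trans (Finset.sum_le_sum fun i _ => ?_)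
  rw [abs_mul]
  refine mul_le_of_le_one_left (abs_nonneg _) (abs_le.2 ⟨?_, ?_⟩)
  · linarith [Nat.floor_le (hq i)]
  · linarith [Nat.lt_floor_add_one (q i)]

theorem exists_nonneg_sum_smul_eq_of_mem_range {K V ι : Type*} [Semiring K] [PartialOrder K]
    [IsOrderedRing K] [AddCommMonoid V] [Module K V] [Fintype ι] {g : ι → V} {n : ℕ}
    {c : Fin n → K} {w : Fin n → V} (hc : ∀ j, 0 ≤ c j) (hw : ∀ j, w j ∈ Set.range g) :
    ∃ q : ι → K, (∀ i, 0 ≤ q i) ∧ ∑ j, c j • w j = ∑ i, q i • g i := by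
  classical
  choose σ hσ using hw
  refine ⟨fun i => ∑ j with σ j = i, c j, fun i => Finset.sum_nonneg fun j _ => hc j, ?_⟩
  simp_rw [Finset.sum_smul]
  rw [← Finset.sum_fiberwise Finset.univ σ]
  refine Finset.sum_congr rfl fun i _ => Finset.sum_congr rfl fun j hj => ?_
  rw [← hσ, (Finset.mem_filter.1 hj).2]

theorem AddSubgroup.closure_addSubmonoidClosure {G : Type*} [AddGroup G] (S : Set G) :
    AddSubgroup.closure (AddSubmonoid.closure S : Set G) = AddSubgroup.closure S :=
  le_antisymm ((AddSubgroup.closure_le _).2 (AddSubgroup.le_closure_toAddSubmonoid S))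
    (AddSubgroup.closure_mono AddSubmonoid.subset_closure)

theorem coneOf_image_toR_closure {r : ℕ} (S : Set (Fin r → ℚ)) :
    coneOf (toR '' AddSubmonoid.closure S) = coneOf (toR '' S) := by
  refine (coneOf_subset_iff.2 ?_).antisymm
    (coneOf_mono (Set.image_mono AddSubmonoid.subset_closure))
  rintro _ ⟨m, hm, rfl⟩
  induction hm using AddSubmonoid.closure_induction with
  | mem x hx => exact subset_coneOf ⟨x, hx, rfl⟩
  | zero => exact toR_zero ▸ zero_mem_coneOf
  | add x y _ _ hx hy => exact toR_add x y ▸ add_mem_coneOf hx hy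

theorem AddSubmonoid.fg_of_fg_closure_of_coneOf_eq {r : ℕ} {M : AddSubmonoid (Fin r → ℚ)}
    (hG : (AddSubgroup.closure (M : Set (Fin r → ℚ))).FG) {t : Finset (Fin r → ℚ)}
    (ht : coneOf (toR '' M) = coneOf (toR '' (t : Set (Fin r → ℚ)))) : M.FG := by
  have htM : ∀ τ : t, (τ : Fin r → ℚ) ∈ rootClosure M := fun τ =>
    mem_rootClosure_of_toR_mem_coneOf (ht ▸ subset_coneOf ⟨τ, τ.2, rfl⟩)
  choose d hd hdM using htM
  let g : t → Fin r → ℚ := fun τ => d τ • τ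
  have hcone : coneOf (toR '' M) ⊆ coneOf (toR '' Set.range g) := by
    rw [ht, coneOf_subset_iff]
    rintro _ ⟨τ, hτ, rfl⟩
    have hτg : toR τ = (d ⟨τ, hτ⟩ : ℝ)⁻¹ • toR (g ⟨τ, hτ⟩) := by
      rw [toR_nsmul, inv_smul_smul₀ (Nat.cast_ne_zero.2 (hd _).ne')]
    rw [hτg]
    exact smul_mem_coneOf (by positivity) (subset_coneOf ⟨_, ⟨_, rfl⟩, rfl⟩)
  refine fg_of_forall_eq_sum_nsmul_add hdM (hG.finite_setOf_abs_le fun j => ∑ τ, |g τ j|)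
    fun m hm => ?_
  obtain ⟨n, c, w, hc, hw, rfl⟩ :=
    exists_rat_nonneg_sum_of_toR_mem_coneOf (hcone (subset_coneOf ⟨m, hm, rfl⟩))
  obtain ⟨q, hq, hcq⟩ := exists_nonneg_sum_smul_eq_of_mem_range hc hw
  refine ⟨fun τ => ⌊q τ⌋₊, _, ⟨?_, ?_⟩, (add_sub_cancel _ _).symm⟩
  · exact sub_mem (AddSubgroup.subset_closure hm)
      (_root_.sum_mem fun τ _ => _root_.nsmul_mem (AddSubgroup.subset_closure (hdM τ)) _)
  · rw [hcq]
    exact abs_sum_smul_sub_sum_floor_smul_le hq g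

/-- Gordan's Lemma, general form: a (commutative, cancellative, torsion-free) monoid
of finite rank — identified with a submonoid of `ℚ^r` — is finitely generated if and
only if its group of differences is finitely generated and the cone `ℝ₊M ⊆ ℝ^r` is a
finite polyhedral rational cone (spanned by finitely many rational vectors). -/
theorem stmt3 {r : ℕ} (M : AddSubmonoid (Fin r → ℚ)) :
    M.FG ↔
      (AddSubgroup.closure (M : Set (Fin r → ℚ))).FG ∧
      ∃ t : Finset (Fin r → ℚ),
        coneOf (toR '' (M : Set (Fin r → ℚ))) = coneOf (toR '' (↑t : Set (Fin r → ℚ))) := by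
  constructor
  · rintro ⟨S, rfl⟩
    exact ⟨⟨S, (AddSubgroup.closure_addSubmonoidClosure _).symm⟩, S, coneOf_image_toR_closure _⟩
  · rintro ⟨hG, t, ht⟩
    exact AddSubmonoid.fg_of_fg_closure_of_coneOf_eq hG ht
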